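/- Soundness of the CN calculus for epistemic weight models: every formula φ of L_CN derivable in the CN calculus is true at every world of every epistemic weight model. -/

import Mathlib

/-- The language L_CN: `φ ::= ⊤ | p | ¬φ | (φ∧φ) | B_a(φ,φ)`. -/
inductive CNForm (Agt Prp : Type) : Type
  | top : CNForm Agt Prp
  | atom : Prp → CNForm Agt Prp
  | neg : CNForm Agt Prp → CNForm Agt Prp
  | and : CNForm Agt Prp → CNForm Agt Prp → CNForm Agt Prp
  | bel : Agt → CNForm Agt Prp → CNForm Agt Prp → CNForm Agt Prp
namespace CNForm

/-- Material implication, defined from `¬` and `∧`. -/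
def imp {Agt Prp : Type} (φ ψ : CNForm Agt Prp) : CNForm Agt Prp := .neg (.and φ (.neg ψ))

/-- Disjunction, defined from `¬` and `∧`. -/
def or {Agt Prp : Type} (φ ψ : CNForm Agt Prp) : CNForm Agt Prp := .neg (.and (.neg φ) (.neg ψ))

/-- Biconditional. -/
def iff {Agt Prp : Type} (φ ψ : CNForm Agt Prp) : CNForm Agt Prp := .and (imp φ ψ) (imp ψ φ)

/-- Knowledge: `K_a φ := ¬B_a(¬φ,⊤)`. -/
def K {Agt Prp : Type} (a : Agt) (φ : CNForm Agt Prp) : CNForm Agt Prp := .neg (.bel a (.neg φ) .top)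

end CNForm

/-- Boolean evaluation of a formula under an assignment `v` of truth values to
the "atomic" formulas (proposition letters and belief formulas), interpreting
`⊤`, `¬`, `∧` classically. -/
def boolEval {Agt Prp : Type} (v : CNForm Agt Prp → Prop) : CNForm Agt Prp → Prop
  | .top => True
  | .atom p => v (.atom p)
  | .neg φ => ¬ boolEval v φ
  | .and φ ψ => boolEval v φ ∧ boolEval v ψ
  | .bel a φ ψ => v (.bel a φ ψ)

/-- `φ` is an instance of a propositional tautology: it evaluates to true under
every assignment of truth values to proposition letters and belief formulas. -/
def CNTaut {Agt Prp : Type} (φ : CNForm Agt Prp) : Prop := ∀ v, boolEval v φ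

/-- The CN calculus. -/
inductive CNDeriv {Agt Prp : Type} : CNForm Agt Prp → Prop
  | taut {φ : CNForm Agt Prp} : CNTaut φ → CNDeriv φ
  | distK (a : Agt) (φ ψ : CNForm Agt Prp) :
      CNDeriv ((CNForm.K a (φ.imp ψ)).imp ((CNForm.K a φ).imp (CNForm.K a ψ)))
  | tAx (a : Agt) (φ : CNForm Agt Prp) : CNDeriv ((CNForm.K a φ).imp φ)
  | fiveB (a : Agt) (φ ψ : CNForm Agt Prp) :
      CNDeriv ((CNForm.bel a φ ψ).imp (CNForm.K a (.bel a φ ψ)))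
  | fourB (a : Agt) (φ ψ : CNForm Agt Prp) :
      CNDeriv ((CNForm.neg (.bel a φ ψ)).imp (CNForm.K a (.neg (.bel a φ ψ))))
  | dAx (a : Agt) (φ ψ : CNForm Agt Prp) :
      CNDeriv ((CNForm.bel a φ ψ).imp (.neg (.bel a φ (.neg ψ))))
  | ecAx (a : Agt) (φ ψ χ : CNForm Agt Prp) :
      CNDeriv ((CNForm.K a (φ.iff ψ)).imp ((CNForm.bel a φ χ).imp (.bel a ψ χ)))
  | mAx (a : Agt) (φ ψ χ : CNForm Agt Prp) :
      CNDeriv ((CNForm.K a (φ.imp ψ)).imp ((CNForm.bel a χ φ).imp (.bel a χ ψ)))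
  | cAx (a : Agt) (φ ψ : CNForm Agt Prp) :
      CNDeriv ((CNForm.bel a φ ψ).imp (.bel a φ (.and φ ψ)))
  | scAx (a : Agt) (φ ψ χ : CNForm Agt Prp) :
      CNDeriv (((CNForm.neg (.bel a χ (.neg φ))).and
          (.neg (CNForm.K a (.neg (χ.and ((CNForm.neg φ).and ψ)))))).imp
        (.bel a χ (φ.or ψ)))
  | mp {φ ψ : CNForm Agt Prp} : CNDeriv (φ.imp ψ) → CNDeriv φ → CNDeriv ψ
  | necK {φ : CNForm Agt Prp} (a : Agt) : CNDeriv φ → CNDeriv (CNForm.K a φ)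

/-- An epistemic weight model `(W, ∼, L, V)`: `W` nonempty countable, `∼_a`
equivalence relations, `L_a : W → ℚ` positive with summable weights on each
knowledge cell, `V` a valuation. -/
structure WeightModel (Agt Prp W : Type) : Type where
  nonempty : Nonempty W
  countable : Countable W
  sim : Agt → W → W → Prop
  equiv : ∀ a, Equivalence (sim a)
  wt : Agt → W → ℚ
  wt_pos : ∀ a w, 0 < wt a w
  wt_summable : ∀ a w, Summable (fun u : {v // sim a w v} => ((wt a u.1 : ℚ) : ℝ))
  V : Prp → Set W

/-- Truth of an L_CN formula in an epistemic weight model: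
`B_a(φ,ψ)` holds at `w` iff the total weight of `[w]_a ∩ ⟦φ∧ψ⟧` strictly
exceeds the total weight of `[w]_a ∩ ⟦φ∧¬ψ⟧`. -/
def WeightModel.truth {Agt Prp W : Type} (M : WeightModel Agt Prp W) :
    CNForm Agt Prp → W → Prop
  | .top, _ => True
  | .atom p, w => w ∈ M.V p
  | .neg φ, w => ¬ M.truth φ w
  | .and φ ψ, w => M.truth φ w ∧ M.truth ψ w
  | .bel a φ ψ, w =>
      (∑' u : {v // M.sim a w v ∧ M.truth φ v ∧ M.truth ψ v}, ((M.wt a u.1 : ℚ) : ℝ)) >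
      (∑' u : {v // M.sim a w v ∧ M.truth φ v ∧ ¬ M.truth ψ v}, ((M.wt a u.1 : ℚ) : ℝ))


/-!
Soundness is proved by induction on derivations, checking each axiom semantically. A belief
clause at `w` compares the weights of two parts of the `a`-cell of `w`; these weights depend only
on the part, are monotone in it, strictly so since all weights are positive, and are the same at
every world of the cell. Strictness makes `K_a φ` mean that `φ` holds throughout the cell, whence
(T), (Dist-K) and necessitation; cell invariance gives (4B) and (5B); monotonicity gives (M),
and together with strictness (SC).
-/

section SubtypeSums

variable {α : Type*} {f : α → ℝ} {s t : Set α}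

theorem tsum_subtype_le_of_subset (hf : 0 ≤ f) (ht : Summable fun x : t => f x) (hst : s ⊆ t) :
    ∑' x : s, f x ≤ ∑' x : t, f x :=
  Summable.tsum_le_tsum_of_inj (Set.inclusion hst) (Set.inclusion_injective hst)
    (fun x _ => hf x) (fun _ => le_rfl) (ht.comp_injective (Set.inclusion_injective hst)) ht

theorem tsum_subtype_lt_of_subset (hf : 0 ≤ f) (ht : Summable fun x : t => f x) (hst : s ⊆ t)
    {x : α} (hxt : x ∈ t) (hxs : x ∉ s) (hx : 0 < f x) :
    ∑' x : s, f x < ∑' x : t, f x := by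
  have hs : Summable fun x : s => f x := ht.comp_injective (Set.inclusion_injective hst)
  rw [tsum_subtype, tsum_subtype]
  refine Summable.tsum_lt_tsum (i := x) (Set.indicator_le_indicator_of_subset hst hf) ?_
    (summable_subtype_iff_indicator.1 hs) (summable_subtype_iff_indicator.1 ht)
  rwa [Set.indicator_of_notMem hxs, Set.indicator_of_mem hxt]

end SubtypeSums

namespace WeightModel

variable {Agt Prp W : Type} (M : WeightModel Agt Prp W) {a : Agt} {w : W} {P Q : W → Prop}

noncomputable def cellWeight (a : Agt) (w : W) (P : W → Prop) : ℝ :=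
  ∑' u : {v | M.sim a w v ∧ P v}, ((M.wt a u.1 : ℚ) : ℝ)

theorem summable_wt_cell :
    Summable fun u : {v | M.sim a w v ∧ P v} => ((M.wt a u.1 : ℚ) : ℝ) := by
  have hsub : {v | M.sim a w v ∧ P v} ⊆ {v | M.sim a w v} := fun _ hv => hv.1
  exact (M.wt_summable a w).comp_injective (i := Set.inclusion hsub) (Set.inclusion_injective hsub)

theorem wt_nonneg (a : Agt) : 0 ≤ fun v => ((M.wt a v : ℚ) : ℝ) :=
  fun v => Rat.cast_nonneg.2 (M.wt_pos a v).le

theorem cellWeight_mono (h : ∀ v, M.sim a w v → P v → Q v) :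
    M.cellWeight a w P ≤ M.cellWeight a w Q :=
  tsum_subtype_le_of_subset (M.wt_nonneg a) M.summable_wt_cell
    fun v hv => ⟨hv.1, h v hv.1 hv.2⟩

theorem cellWeight_lt (h : ∀ v, M.sim a w v → P v → Q v) {v : W} (hv : M.sim a w v)
    (hQ : Q v) (hP : ¬ P v) : M.cellWeight a w P < M.cellWeight a w Q :=
  tsum_subtype_lt_of_subset (M.wt_nonneg a) M.summable_wt_cell
    (fun u hu => ⟨hu.1, h u hu.1 hu.2⟩) ⟨hv, hQ⟩ (fun hv' => hP hv'.2)
    (by exact_mod_cast M.wt_pos a v)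

theorem cellWeight_congr (h : ∀ v, M.sim a w v → (P v ↔ Q v)) :
    M.cellWeight a w P = M.cellWeight a w Q :=
  (M.cellWeight_mono fun v hv => (h v hv).1).antisymm (M.cellWeight_mono fun v hv => (h v hv).2)

theorem cellWeight_eq_zero (h : ∀ v, M.sim a w v → ¬ P v) : M.cellWeight a w P = 0 := by
  have : IsEmpty {v | M.sim a w v ∧ P v} := ⟨fun v => h v v.2.1 v.2.2⟩
  exact tsum_empty

theorem cellWeight_pos_iff : 0 < M.cellWeight a w P ↔ ∃ v, M.sim a w v ∧ P v := by
  constructor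
  · intro hpos
    by_contra! h
    exact hpos.ne' (M.cellWeight_eq_zero h)
  · rintro ⟨v, hv, hP⟩
    rw [← M.cellWeight_eq_zero (P := fun _ => False) fun _ _ => id]
    exact M.cellWeight_lt (fun _ _ => False.elim) hv hP id

theorem cellWeight_eq_of_sim {v : W} (hv : M.sim a w v) (P : W → Prop) :
    M.cellWeight a w P = M.cellWeight a v P := by
  have hcell : {u | M.sim a w u ∧ P u} = {u | M.sim a v u ∧ P u} := by
    ext u
    exact and_congr_left' ⟨(M.equiv a).trans ((M.equiv a).symm hv), (M.equiv a).trans hv⟩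
  rw [cellWeight, hcell, cellWeight]

variable {φ φ' ψ ψ' χ : CNForm Agt Prp}

theorem truth_imp : M.truth (φ.imp ψ) w ↔ (M.truth φ w → M.truth ψ w) := by
  simp only [CNForm.imp, truth]
  tauto

theorem truth_or : M.truth (φ.or ψ) w ↔ M.truth φ w ∨ M.truth ψ w := by
  simp only [CNForm.or, truth]
  tauto

theorem truth_iff : M.truth (φ.iff ψ) w ↔ (M.truth φ w ↔ M.truth ψ w) := by
  simp only [CNForm.iff, CNForm.imp, truth]
  tauto

theorem truth_bel : M.truth (.bel a φ ψ) w ↔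
    M.cellWeight a w (fun v => M.truth φ v ∧ ¬ M.truth ψ v) <
      M.cellWeight a w (fun v => M.truth φ v ∧ M.truth ψ v) :=
  Iff.rfl

theorem truth_bel_neg : M.truth (.bel a φ (.neg ψ)) w ↔
    M.cellWeight a w (fun v => M.truth φ v ∧ M.truth ψ v) <
      M.cellWeight a w (fun v => M.truth φ v ∧ ¬ M.truth ψ v) := by
  rw [truth_bel]
  simp only [truth, not_not]

theorem truth_K : M.truth (CNForm.K a φ) w ↔ ∀ v, M.sim a w v → M.truth φ v := by
  have hnone : M.cellWeight a w (fun v => M.truth (.neg φ) v ∧ ¬ M.truth .top v) = 0 :=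
    M.cellWeight_eq_zero fun _ _ h => h.2 trivial
  rw [CNForm.K, truth, truth_bel, hnone, cellWeight_pos_iff]
  simp only [truth, and_true, not_exists, not_and, not_not]

theorem truth_bel_iff_of_sim {v : W} (hv : M.sim a w v) :
    M.truth (.bel a φ ψ) v ↔ M.truth (.bel a φ ψ) w := by
  simp only [truth_bel, M.cellWeight_eq_of_sim hv]

theorem truth_bel_congr (hφ : ∀ v, M.sim a w v → (M.truth φ v ↔ M.truth φ' v))
    (hψ : ∀ v, M.sim a w v → M.truth φ v → (M.truth ψ v ↔ M.truth ψ' v)) :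
    M.truth (.bel a φ ψ) w ↔ M.truth (.bel a φ' ψ') w := by
  have hpos := M.cellWeight_congr (P := fun v => M.truth φ v ∧ M.truth ψ v)
    (Q := fun v => M.truth φ' v ∧ M.truth ψ' v) fun v hv => by
      rw [← hφ v hv]; exact and_congr_right (hψ v hv)
  have hneg := M.cellWeight_congr (P := fun v => M.truth φ v ∧ ¬ M.truth ψ v)
    (Q := fun v => M.truth φ' v ∧ ¬ M.truth ψ' v) fun v hv => by
      rw [← hφ v hv]; exact and_congr_right fun h => not_congr (hψ v hv h)
  rw [truth_bel, truth_bel, hpos, hneg]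

theorem truth_bel_mono_right (h : ∀ v, M.sim a w v → M.truth χ v → M.truth φ v → M.truth ψ v)
    (hb : M.truth (.bel a χ φ) w) : M.truth (.bel a χ ψ) w := by
  rw [truth_bel] at hb ⊢
  calc M.cellWeight a w (fun v => M.truth χ v ∧ ¬ M.truth ψ v)
      ≤ M.cellWeight a w (fun v => M.truth χ v ∧ ¬ M.truth φ v) :=
        M.cellWeight_mono fun v hv hc => ⟨hc.1, fun hφ => hc.2 (h v hv hc.1 hφ)⟩
    _ < M.cellWeight a w (fun v => M.truth χ v ∧ M.truth φ v) := hb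
    _ ≤ M.cellWeight a w (fun v => M.truth χ v ∧ M.truth ψ v) :=
        M.cellWeight_mono fun v hv hc => ⟨hc.1, h v hv hc.1 hc.2⟩

theorem truth_of_cnTaut (hφ : CNTaut φ) : M.truth φ w := by
  have hbool : ∀ ψ : CNForm Agt Prp, boolEval (M.truth · w) ψ ↔ M.truth ψ w := by
    intro ψ
    induction ψ with
    | top | atom | bel => rfl
    | neg _ ih => exact not_congr ih
    | and _ _ ih₁ ih₂ => exact and_congr ih₁ ih₂
  exact (hbool φ).1 (hφ _)

theorem truth_distK :
    M.truth ((CNForm.K a (φ.imp ψ)).imp ((CNForm.K a φ).imp (CNForm.K a ψ))) w := by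
  simp only [truth_imp, truth_K]
  exact fun himp hφ v hv => (himp v hv) (hφ v hv)

theorem truth_tAx : M.truth ((CNForm.K a φ).imp φ) w :=
  M.truth_imp.2 fun hK => M.truth_K.1 hK w ((M.equiv a).refl w)

theorem truth_fiveB : M.truth ((CNForm.bel a φ ψ).imp (CNForm.K a (.bel a φ ψ))) w :=
  M.truth_imp.2 fun hb => M.truth_K.2 fun _ hv => (M.truth_bel_iff_of_sim hv).2 hb

theorem truth_fourB :
    M.truth ((CNForm.neg (.bel a φ ψ)).imp (CNForm.K a (.neg (.bel a φ ψ)))) w :=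
  M.truth_imp.2 fun hb => M.truth_K.2 fun _ hv => (M.truth_bel_iff_of_sim hv).not.2 hb

theorem truth_dAx : M.truth ((CNForm.bel a φ ψ).imp (.neg (.bel a φ (.neg ψ)))) w :=
  M.truth_imp.2 fun hb hb' => (M.truth_bel.1 hb).asymm (M.truth_bel_neg.1 hb')

theorem truth_ecAx :
    M.truth ((CNForm.K a (φ.iff ψ)).imp ((CNForm.bel a φ χ).imp (.bel a ψ χ))) w :=
  M.truth_imp.2 fun hK => M.truth_imp.2 (M.truth_bel_congr
    (fun v hv => M.truth_iff.1 (M.truth_K.1 hK v hv)) fun _ _ _ => Iff.rfl).1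

theorem truth_mAx :
    M.truth ((CNForm.K a (φ.imp ψ)).imp ((CNForm.bel a χ φ).imp (.bel a χ ψ))) w :=
  M.truth_imp.2 fun hK => M.truth_imp.2 <|
    M.truth_bel_mono_right fun v hv _ => M.truth_imp.1 (M.truth_K.1 hK v hv)

theorem truth_cAx : M.truth ((CNForm.bel a φ ψ).imp (.bel a φ (.and φ ψ))) w :=
  M.truth_imp.2 (M.truth_bel_congr (fun _ _ => Iff.rfl) fun _ _ hφ => (and_iff_right hφ).symm).1

theorem truth_scAx :
    M.truth (((CNForm.neg (.bel a χ (.neg φ))).and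
        (.neg (CNForm.K a (.neg (χ.and ((CNForm.neg φ).and ψ)))))).imp
      (.bel a χ (φ.or ψ))) w := by
  refine M.truth_imp.2 fun ⟨hnb, hnK⟩ => M.truth_bel.2 ?_
  have hle := not_lt.1 (M.truth_bel_neg.not.1 hnb)
  obtain ⟨v, hv, hχ, hnφ, hψ⟩ : ∃ v, M.sim a w v ∧ M.truth χ v ∧ ¬ M.truth φ v ∧ M.truth ψ v := by
    simpa only [truth_K, truth, not_forall, not_not, exists_prop] using hnK
  calc M.cellWeight a w (fun u => M.truth χ u ∧ ¬ M.truth (φ.or ψ) u)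
      ≤ M.cellWeight a w (fun u => M.truth χ u ∧ ¬ M.truth φ u) :=
        M.cellWeight_mono fun _ _ h => ⟨h.1, fun hφ => h.2 (M.truth_or.2 (.inl hφ))⟩
    _ ≤ M.cellWeight a w (fun u => M.truth χ u ∧ M.truth φ u) := hle
    _ < M.cellWeight a w (fun u => M.truth χ u ∧ M.truth (φ.or ψ) u) :=
        M.cellWeight_lt (fun _ _ h => ⟨h.1, M.truth_or.2 (.inl h.2)⟩) hv
          ⟨hχ, M.truth_or.2 (.inr hψ)⟩ fun h => hnφ h.2

end WeightModel

theorem cn_sound_weight_general {Agt Prp : Type} (φ : CNForm Agt Prp)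
    (h : CNDeriv φ) :
    ∀ (W : Type) (M : WeightModel Agt Prp W) (w : W), M.truth φ w := by
  intro W M w
  induction h generalizing w with
  | taut h => exact M.truth_of_cnTaut h
  | distK => exact M.truth_distK
  | tAx => exact M.truth_tAx
  | fiveB => exact M.truth_fiveB
  | fourB => exact M.truth_fourB
  | dAx => exact M.truth_dAx
  | ecAx => exact M.truth_ecAx
  | mAx => exact M.truth_mAx
  | cAx => exact M.truth_cAx
  | scAx => exact M.truth_scAx
  | mp _ _ ihImp ih => exact M.truth_imp.1 (ihImp w) (ih w)
  | necK _ _ ih => exact M.truth_K.2 fun v _ => ih v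

/-- Soundness of the CN calculus for epistemic weight models. -/
theorem cn_sound_weight {Agt Prp : Type} [Finite Agt] (φ : CNForm Agt Prp)
    (h : CNDeriv φ) :
    ∀ (W : Type) (M : WeightModel Agt Prp W) (w : W), M.truth φ w :=
  cn_sound_weight_general φ h
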